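/- Let M be the 3-valued matrix with values {1,2,3}, designated values {1,2}, negation ¬1=3, ¬2=1, ¬3=1, and binary operations (x,y) ↦ (x∨y, x∧dy, x⊃y): (1,1)↦(2,1,1), (1,2)↦(2,1,1), (1,3)↦(1,3,3), (2,1)↦(1,2,2), (2,2)↦(1,2,2), (2,3)↦(2,3,3), (3,1)↦(1,3,2), (3,2)↦(2,3,1), (3,3)↦(3,3,1). Then M validates all axiom schemes C1–C15, the designated values are closed under modus ponens for ⊃, and there exist values a,b,c such that ¬((a∧db)∨c) ⊃ (a ⊃ ¬(b∨c)) is not designated. Consequently the scheme ¬((α∧dβ)∨γ) ⊃ (α ⊃ ¬(β∨γ)) (axiom D19) is not derivable in the system C. -/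
import Mathlib


inductive Fm where
  | atom : Nat → Fm
  | neg : Fm → Fm
  | or : Fm → Fm → Fm
  | dand : Fm → Fm → Fm
  | dimp : Fm → Fm → Fm

inductive CProv : Fm → Prop where
  | mp {a b : Fm} : CProv (.dimp a b) → CProv a → CProv b
  | ax1 {a b : Fm} : CProv (.dimp (a) (.dimp (b) (a)))
  | ax2 {a b c : Fm} : CProv (.dimp (.dimp (a) (.dimp (b) (c))) (.dimp (.dimp (a) (b)) (.dimp (a) (c))))
  | ax3 {a b : Fm} : CProv (.dimp (.dand (a) (b)) (a))
  | ax4 {a b : Fm} : CProv (.dimp (.dand (a) (b)) (b))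
  | ax5 {a b : Fm} : CProv (.dimp (a) (.dimp (b) (.dand (a) (b))))
  | ax6 {a b : Fm} : CProv (.dimp (a) (.or (a) (b)))
  | ax7 {a b : Fm} : CProv (.dimp (b) (.or (a) (b)))
  | ax8 {a b c : Fm} : CProv (.dimp (.dimp (a) (c)) (.dimp (.dimp (b) (c)) (.dimp (.or (a) (b)) (c))))
  | ax9 {a b : Fm} : CProv (.or (a) (.dimp (a) (b)))
  | ax10 {a : Fm} : CProv (.neg (.dand (.neg (a)) (.dand (.neg (.neg (a))) (.neg (.or (a) (.neg (a)))))))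
  | ax11 {a b c : Fm} : CProv (.dimp (.neg (.dand (.neg (a)) (.dand (.neg (b)) (.neg (.or (a) (b)))))) (.neg (.dand (.neg (a)) (.dand (.neg (b)) (.dand (.neg (c)) (.neg (.or (a) (.or (b) (c)))))))))
  | ax12 {a b c : Fm} : CProv (.dimp (.neg (.dand (.neg (a)) (.dand (.neg (b)) (.dand (.neg (c)) (.neg (.or (a) (.or (b) (c)))))))) (.neg (.dand (.neg (a)) (.dand (.neg (c)) (.dand (.neg (b)) (.neg (.or (a) (.or (c) (b)))))))))
  | ax13 {a b c : Fm} : CProv (.dimp (.neg (.dand (.neg (a)) (.dand (.neg (b)) (.dand (.neg (c)) (.neg (.or (a) (.or (b) (c)))))))) (.dimp (.or (a) (.or (b) (.neg (c)))) (.or (a) (b))))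
  | ax14 {a b : Fm} : CProv (.dimp (.neg (.dand (.neg (a)) (.neg (b)))) (.or (a) (b)))
  | ax15 {a b : Fm} : CProv (.dimp (.or (a) (.or (b) (.neg (b)))) (.neg (.dand (.neg (a)) (.neg (.or (b) (.neg (b)))))))

def vneg : Fin 3 → Fin 3 := ![2, 0, 0]

def vor : Fin 3 → Fin 3 → Fin 3 := ![![1, 1, 0], ![0, 0, 1], ![0, 1, 2]]

def vand : Fin 3 → Fin 3 → Fin 3 := ![![0, 0, 2], ![1, 1, 2], ![2, 2, 2]]

def vimp : Fin 3 → Fin 3 → Fin 3 := ![![0, 0, 2], ![1, 1, 2], ![1, 0, 0]]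

def Des (x : Fin 3) : Prop := x ≠ 2



def ev (v : Nat → Fin 3) : Fm → Fin 3
  | .atom n => v n
  | .neg a => vneg (ev v a)
  | .or a b => vor (ev v a) (ev v b)
  | .dand a b => vand (ev v a) (ev v b)
  | .dimp a b => vimp (ev v a) (ev v b)

theorem lmp : ∀ x y : Fin 3, x ≠ 2 → vimp x y ≠ 2 → y ≠ 2 := by decide
theorem l1 : ∀ x y : Fin 3, vimp x (vimp y x) ≠ 2 := by decide
theorem l2 : ∀ x y z : Fin 3, vimp (vimp x (vimp y z)) (vimp (vimp x y) (vimp x z)) ≠ 2 := by decide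
theorem l3 : ∀ x y : Fin 3, vimp (vand x y) x ≠ 2 := by decide
theorem l4 : ∀ x y : Fin 3, vimp (vand x y) y ≠ 2 := by decide
theorem l5 : ∀ x y : Fin 3, vimp x (vimp y (vand x y)) ≠ 2 := by decide
theorem l6 : ∀ x y : Fin 3, vimp x (vor x y) ≠ 2 := by decide
theorem l7 : ∀ x y : Fin 3, vimp y (vor x y) ≠ 2 := by decide
theorem l8 : ∀ x y z : Fin 3, vimp (vimp x z) (vimp (vimp y z) (vimp (vor x y) z)) ≠ 2 := by decide
theorem l9 : ∀ x y : Fin 3, vor x (vimp x y) ≠ 2 := by decide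
theorem l10 : ∀ x : Fin 3, vneg (vand (vneg x) (vand (vneg (vneg x)) (vneg (vor x (vneg x))))) ≠ 2 := by decide
theorem l11 : ∀ x y z : Fin 3, vimp (vneg (vand (vneg x) (vand (vneg y) (vneg (vor x y))))) (vneg (vand (vneg x) (vand (vneg y) (vand (vneg z) (vneg (vor x (vor y z))))))) ≠ 2 := by decide
theorem l12 : ∀ x y z : Fin 3, vimp (vneg (vand (vneg x) (vand (vneg y) (vand (vneg z) (vneg (vor x (vor y z))))))) (vneg (vand (vneg x) (vand (vneg z) (vand (vneg y) (vneg (vor x (vor z y))))))) ≠ 2 := by decide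
theorem l13 : ∀ x y z : Fin 3, vimp (vneg (vand (vneg x) (vand (vneg y) (vand (vneg z) (vneg (vor x (vor y z))))))) (vimp (vor x (vor y (vneg z))) (vor x y)) ≠ 2 := by decide
theorem l14 : ∀ x y : Fin 3, vimp (vneg (vand (vneg x) (vneg y))) (vor x y) ≠ 2 := by decide
theorem l15 : ∀ x y : Fin 3, vimp (vor x (vor y (vneg y))) (vneg (vand (vneg x) (vneg (vor y (vneg y))))) ≠ 2 := by decide

theorem sound (v : Nat → Fin 3) {f : Fm} (h : CProv f) : Des (ev v f) := by
  induction h with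
  | mp _ _ ih1 ih2 => exact lmp _ _ ih2 ih1
  | ax1 => exact l1 _ _
  | ax2 => exact l2 _ _ _
  | ax3 => exact l3 _ _
  | ax4 => exact l4 _ _
  | ax5 => exact l5 _ _
  | ax6 => exact l6 _ _
  | ax7 => exact l7 _ _
  | ax8 => exact l8 _ _ _
  | ax9 => exact l9 _ _
  | ax10 => exact l10 _
  | ax11 => exact l11 _ _ _
  | ax12 => exact l12 _ _ _
  | ax13 => exact l13 _ _ _
  | ax14 => exact l14 _ _
  | ax15 => exact l15 _ _

theorem stmt6 :
    (∀ a b : Fin 3, Des (vimp (a) (vimp (b) (a)))) ∧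
    (∀ a b c : Fin 3, Des (vimp (vimp (a) (vimp (b) (c))) (vimp (vimp (a) (b)) (vimp (a) (c))))) ∧
    (∀ a b : Fin 3, Des (vimp (vand (a) (b)) (a))) ∧
    (∀ a b : Fin 3, Des (vimp (vand (a) (b)) (b))) ∧
    (∀ a b : Fin 3, Des (vimp (a) (vimp (b) (vand (a) (b))))) ∧
    (∀ a b : Fin 3, Des (vimp (a) (vor (a) (b)))) ∧
    (∀ a b : Fin 3, Des (vimp (b) (vor (a) (b)))) ∧
    (∀ a b c : Fin 3, Des (vimp (vimp (a) (c)) (vimp (vimp (b) (c)) (vimp (vor (a) (b)) (c))))) ∧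
    (∀ a b : Fin 3, Des (vor (a) (vimp (a) (b)))) ∧
    (∀ a : Fin 3, Des (vneg (vand (vneg (a)) (vand (vneg (vneg (a))) (vneg (vor (a) (vneg (a)))))))) ∧
    (∀ a b c : Fin 3, Des (vimp (vneg (vand (vneg (a)) (vand (vneg (b)) (vneg (vor (a) (b)))))) (vneg (vand (vneg (a)) (vand (vneg (b)) (vand (vneg (c)) (vneg (vor (a) (vor (b) (c)))))))))) ∧
    (∀ a b c : Fin 3, Des (vimp (vneg (vand (vneg (a)) (vand (vneg (b)) (vand (vneg (c)) (vneg (vor (a) (vor (b) (c)))))))) (vneg (vand (vneg (a)) (vand (vneg (c)) (vand (vneg (b)) (vneg (vor (a) (vor (c) (b)))))))))) ∧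
    (∀ a b c : Fin 3, Des (vimp (vneg (vand (vneg (a)) (vand (vneg (b)) (vand (vneg (c)) (vneg (vor (a) (vor (b) (c)))))))) (vimp (vor (a) (vor (b) (vneg (c)))) (vor (a) (b))))) ∧
    (∀ a b : Fin 3, Des (vimp (vneg (vand (vneg (a)) (vneg (b)))) (vor (a) (b)))) ∧
    (∀ a b : Fin 3, Des (vimp (vor (a) (vor (b) (vneg (b)))) (vneg (vand (vneg (a)) (vneg (vor (b) (vneg (b)))))))) ∧
    (∀ x y : Fin 3, Des x → Des (vimp x y) → Des y) ∧
    (∃ a b c : Fin 3, ¬ Des (vimp (vneg (vor (vand (a) (b)) (c))) (vimp (a) (vneg (vor (b) (c)))))) ∧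
    ¬ (∀ a b c : Fm, CProv (.dimp (.neg (.or (.dand (a) (b)) (c))) (.dimp (a) (.neg (.or (b) (c)))))) := by
  refine ⟨fun a b => l1 a b, fun a b c => l2 a b c, fun a b => l3 a b, fun a b => l4 a b,
    fun a b => l5 a b, fun a b => l6 a b, fun a b => l7 a b, fun a b c => l8 a b c,
    fun a b => l9 a b, fun a => l10 a, fun a b c => l11 a b c, fun a b c => l12 a b c,
    fun a b c => l13 a b c, fun a b => l14 a b, fun a b => l15 a b,
    fun x y hx hxy => lmp x y hx hxy,
    ⟨0, 1, 0, ?_⟩, ?_⟩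
  · intro hd
    exact hd (by decide)
  · intro h
    have h1 := sound (fun n => if n = 0 then (0 : Fin 3) else if n = 1 then 1 else 0)
      (h (.atom 0) (.atom 1) (.atom 2))
    have h2 : ev (fun n => if n = 0 then (0 : Fin 3) else if n = 1 then 1 else 0)
        (.dimp (.neg (.or (.dand (.atom 0) (.atom 1)) (.atom 2)))
          (.dimp (.atom 0) (.neg (.or (.atom 1) (.atom 2))))) = 2 := by decide
    exact h1 h2
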